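/- Let n ≥ 2, let 0 < α < n/3, and let ν be a real parameter with n − 3α < ν < 1 + (n − 3α). Let u : ℝⁿ → ℝⁿ and θ : ℝⁿ → ℝ be measurable with |u| ∈ L^{(2n+ν)/(n−α)}(ℝⁿ) and θ ∈ L^{(2n+ν)/(n−α)}(ℝⁿ). Then there is a constant C depending only on φ, n, α, ν such that for every R > 1 the function x ↦ θ(x)² (u(x) · ∇φ_R(x)) is integrable and |∫_{ℝⁿ} θ(x)² (u(x) · ∇φ_R(x)) dx| ≤ C ‖u‖_{L^{(2n+ν)/(n−α)}} ‖θ‖²_{L^{(2n+ν)/(n−α)}} R^{−1 + n(3α+ν−n)/(2n+ν)}. In particular, since n(3α+ν−n)/(2n+ν) < 1, this integral tends to 0 as R → +∞. -/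

import Mathlib

open MeasureTheory Filter
open scoped RealInnerProductSpace

open InnerProductSpace
open scoped ENNReal


variable {n : ℕ}

lemma gradient_comp_smul' (φ : EuclideanSpace ℝ (Fin n) → ℝ) (hφ : ContDiff ℝ (⊤ : ℕ∞) φ)
    (c : ℝ) (x : EuclideanSpace ℝ (Fin n)) :
    gradient (fun y => φ (c • y)) x = c • gradient φ (c • x) := by
  have hd : DifferentiableAt ℝ φ (c • x) := hφ.differentiable (by simp) _
  have h1 : HasFDerivAt (fun y => φ (c • y))
      ((fderiv ℝ φ (c • x)).comp (c • ContinuousLinearMap.id ℝ (EuclideanSpace ℝ (Fin n)))) x := by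
    have h := HasFDerivAt.comp x (by simpa using hd.hasFDerivAt)
      (c • ContinuousLinearMap.id ℝ (EuclideanSpace ℝ (Fin n))).hasFDerivAt
    exact h
  have h2 : (fderiv ℝ φ (c • x)).comp (c • ContinuousLinearMap.id ℝ (EuclideanSpace ℝ (Fin n)))
      = c • fderiv ℝ φ (c • x) := by
    ext y; simp [mul_comm]
  unfold gradient
  rw [h1.fderiv, h2, LinearIsometryEquiv.map_smul]

lemma gradient_eq_zero_of_eventually_const' (φ : EuclideanSpace ℝ (Fin n) → ℝ)
    {x : EuclideanSpace ℝ (Fin n)} (h : φ =ᶠ[nhds x] 0) : gradient φ x = 0 := by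
  unfold gradient
  rw [Filter.EventuallyEq.fderiv_eq h]
  have : fderiv ℝ (0 : EuclideanSpace ℝ (Fin n) → ℝ) x = 0 := fderiv_const_apply 0
  simp [this]


lemma holder3 {E F : Type*} [MeasurableSpace E] [NormedAddCommGroup F]
    (μ : Measure E) {pr qr : ℝ} (hpr : 0 < pr) (hqr : 0 < qr)
    (hsum : 1/pr + (2/pr + 1/qr) = 1)
    (u : E → F) (θ : E → ℝ) (hu : AEStronglyMeasurable u μ) (hθ : AEStronglyMeasurable θ μ)
    (s : Set E) (hs : MeasurableSet s) :
    ∫⁻ x, (‖u x‖₊ : ℝ≥0∞) * ((‖θ x‖₊ : ℝ≥0∞) ^ (2:ℝ) * s.indicator (fun _ => 1) x) ∂μ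
      ≤ (∫⁻ x, (‖u x‖₊ : ℝ≥0∞) ^ pr ∂μ) ^ (1/pr)
        * ((∫⁻ x, (‖θ x‖₊ : ℝ≥0∞) ^ pr ∂μ) ^ (1/pr)) ^ (2:ℝ) * (μ s) ^ (1/qr) := by
  set fs : Fin 3 → E → ℝ≥0∞ := ![fun x => (‖u x‖₊ : ℝ≥0∞) ^ pr,
    fun x => (‖θ x‖₊ : ℝ≥0∞) ^ pr, s.indicator (fun _ => 1)] with hfs
  set ws : Fin 3 → ℝ := ![1/pr, 2/pr, 1/qr] with hws
  have key := ENNReal.lintegral_prod_norm_pow_le (μ := μ) Finset.univ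
    (f := fs) (p := ws) ?_ ?_ ?_
  · have e0 : ∀ x, fs 0 x ^ ws 0 = (‖u x‖₊ : ℝ≥0∞) := by
      intro x
      simp only [hfs, hws]
      rw [Matrix.cons_val_zero, Matrix.cons_val_zero, ← ENNReal.rpow_mul,
        mul_one_div, div_self hpr.ne', ENNReal.rpow_one]
    have e1 : ∀ x, fs 1 x ^ ws 1 = (‖θ x‖₊ : ℝ≥0∞) ^ (2:ℝ) := by
      intro x
      simp only [hfs, hws]
      rw [Matrix.cons_val_one, Matrix.cons_val_zero, Matrix.cons_val_one, Matrix.cons_val_zero,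
        ← ENNReal.rpow_mul]
      congr 1
      field_simp
    have e2 : ∀ x, fs 2 x ^ ws 2 = s.indicator (fun _ => 1) x := by
      intro x
      simp only [hfs, hws, Matrix.cons_val_two, Matrix.tail_cons, Matrix.head_cons]
      by_cases hx : x ∈ s
      · simp [Set.indicator_of_mem hx, ENNReal.one_rpow]
      · rw [Set.indicator_of_notMem hx]
        exact ENNReal.zero_rpow_of_pos (one_div_pos.mpr hqr)
    calc ∫⁻ x, (‖u x‖₊ : ℝ≥0∞) * ((‖θ x‖₊ : ℝ≥0∞) ^ (2:ℝ) * s.indicator (fun _ => 1) x) ∂μ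
        = ∫⁻ x, ∏ i, fs i x ^ ws i ∂μ := by
          apply lintegral_congr; intro x
          rw [Fin.prod_univ_three, e0, e1, e2, mul_assoc]
      _ ≤ ∏ i, (∫⁻ x, fs i x ∂μ) ^ ws i := key
      _ = (∫⁻ x, (‖u x‖₊ : ℝ≥0∞) ^ pr ∂μ) ^ (1/pr)
            * ((∫⁻ x, (‖θ x‖₊ : ℝ≥0∞) ^ pr ∂μ) ^ (1/pr)) ^ (2:ℝ) * (μ s) ^ (1/qr) := by
          rw [Fin.prod_univ_three]
          simp only [hfs, hws, Matrix.cons_val_zero, Matrix.cons_val_one, Matrix.head_cons,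
            Matrix.cons_val_two, Matrix.tail_cons]
          have hind : ∫⁻ x, s.indicator (fun _ => (1:ℝ≥0∞)) x ∂μ = μ s := by
            exact lintegral_indicator_one (μ := μ) hs
          have h2 : ((∫⁻ x, (‖θ x‖₊ : ℝ≥0∞) ^ pr ∂μ) ^ (1/pr)) ^ (2:ℝ)
              = (∫⁻ x, (‖θ x‖₊ : ℝ≥0∞) ^ pr ∂μ) ^ (2/pr) := by
            rw [← ENNReal.rpow_mul]
            congr 1
            field_simp
          rw [hind, h2]
  · intro i _
    fin_cases i
    · exact hu.enorm.pow_const pr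
    · exact hθ.enorm.pow_const pr
    · exact ((measurable_const.indicator hs).aemeasurable)
  · rw [Fin.sum_univ_three]
    simp only [hws, Matrix.cons_val_zero, Matrix.cons_val_one, Matrix.head_cons,
      Matrix.cons_val_two, Matrix.tail_cons]
    linarith [hsum]
  · intro i _
    fin_cases i
    · exact le_of_lt (by simpa [hws] using one_div_pos.mpr hpr)
    · refine le_of_lt (by simpa [hws] using div_pos two_pos hpr)
    · exact le_of_lt (by simpa [hws] using one_div_pos.mpr hqr)

/-- Case `0 < α < n/3` of the transport-term estimate: for `n − 3α < ν < 1 + (n − 3α)`,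
if `|u|, θ ∈ L^{(2n+ν)/(n−α)}(ℝⁿ)`, then
`|∫ θ² (u · ∇φ_R) dx| ≤ C ‖u‖ ‖θ‖² R^{−1+n(3α+ν−n)/(2n+ν)}` with `C = C(φ,n,α,ν)`,
and since `n(3α+ν−n)/(2n+ν) < 1` the integral tends to `0` as `R → ∞`. -/
theorem transport_term_small_alpha_case (n : ℕ) (hn : 2 ≤ n) (α ν : ℝ)
    (hα0 : 0 < α) (hα1 : α < (n : ℝ) / 3)
    (hν1 : (n : ℝ) - 3 * α < ν) (hν2 : ν < 1 + ((n : ℝ) - 3 * α))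
    (φ : EuclideanSpace ℝ (Fin n) → ℝ)
    (hφ_smooth : ContDiff ℝ (⊤ : ℕ∞) φ) (hφ_supp : HasCompactSupport φ)
    (hφ_nonneg : ∀ x, 0 ≤ φ x) (hφ_le_one : ∀ x, φ x ≤ 1)
    (hφ_one : ∀ x : EuclideanSpace ℝ (Fin n), ‖x‖ ≤ 1 / 2 → φ x = 1)
    (hφ_zero : ∀ x : EuclideanSpace ℝ (Fin n), 1 ≤ ‖x‖ → φ x = 0)
    (u : EuclideanSpace ℝ (Fin n) → EuclideanSpace ℝ (Fin n))
    (θ : EuclideanSpace ℝ (Fin n) → ℝ)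
    (hu : MemLp u (ENNReal.ofReal ((2 * n + ν) / ((n : ℝ) - α))) volume)
    (hθ : MemLp θ (ENNReal.ofReal ((2 * n + ν) / ((n : ℝ) - α))) volume) :
    (∃ C : ℝ, 0 < C ∧ ∀ R : ℝ, 1 < R →
      Integrable (fun x => θ x ^ 2 * ⟪u x, gradient (fun y => φ (R⁻¹ • y)) x⟫) volume ∧
      |∫ x, θ x ^ 2 * ⟪u x, gradient (fun y => φ (R⁻¹ • y)) x⟫|
        ≤ C * (eLpNorm u (ENNReal.ofReal ((2 * n + ν) / ((n : ℝ) - α))) volume).toReal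
            * (eLpNorm θ (ENNReal.ofReal ((2 * n + ν) / ((n : ℝ) - α))) volume).toReal ^ 2
            * R ^ (-1 + (n : ℝ) * (3 * α + ν - (n : ℝ)) / (2 * n + ν))) ∧
    ((n : ℝ) * (3 * α + ν - (n : ℝ)) / (2 * n + ν) < 1) ∧
    Tendsto (fun R : ℝ => ∫ x, θ x ^ 2 * ⟪u x, gradient (fun y => φ (R⁻¹ • y)) x⟫)
      atTop (nhds 0) := by
  -- numeric setup
  have hn1 : (1:ℝ) ≤ (n:ℝ) := by exact_mod_cast Nat.one_le_of_lt hn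
  have hn0 : (0:ℝ) < (n:ℝ) := by linarith
  have h3α : 0 < (n : ℝ) - 3 * α := by linarith
  have hν0 : 0 < ν := by linarith
  have hd : 0 < (n : ℝ) - α := by linarith
  have hnum : 0 < 2 * (n : ℝ) + ν := by linarith
  have hts : 0 < 3 * α + ν - (n : ℝ) := by linarith
  set pr : ℝ := (2 * (n:ℝ) + ν) / ((n : ℝ) - α) with hprdef
  set qr : ℝ := (2 * (n:ℝ) + ν) / (3 * α + ν - (n : ℝ)) with hqrdef
  have hpr : 0 < pr := div_pos hnum hd
  have hqr : 0 < qr := div_pos hnum hts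
  have h1p : 1 / pr = ((n:ℝ) - α) / (2 * (n:ℝ) + ν) := by rw [hprdef, one_div, inv_div]
  have h1q : 1 / qr = (3 * α + ν - (n:ℝ)) / (2 * (n:ℝ) + ν) := by rw [hqrdef, one_div, inv_div]
  have hsum : 1 / pr + (2 / pr + 1 / qr) = 1 := by
    have h2p : 2 / pr = 2 * (1 / pr) := by ring
    rw [h2p, h1p, h1q]
    field_simp
    ring
  set β : ℝ := (n : ℝ) * (3 * α + ν - (n : ℝ)) / (2 * (n:ℝ) + ν) with hβdef
  have hβ1 : β < 1 := by
    rw [hβdef, div_lt_one hnum]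
    nlinarith [mul_lt_mul_of_pos_left (show 3 * α + ν - (n:ℝ) < 1 by linarith) hn0]
  have hβq : (n : ℝ) * (1 / qr) = β := by rw [h1q, hβdef]; ring
  set P : ℝ≥0∞ := ENNReal.ofReal pr with hPdef
  have hP0 : P ≠ 0 := (ENNReal.ofReal_pos.mpr hpr).ne'
  have hPt : P ≠ ⊤ := ENNReal.ofReal_ne_top
  have hPr : P.toReal = pr := ENNReal.toReal_ofReal hpr.le
  -- gradient facts
  have hgradc : Continuous (gradient φ) :=
    (toDual ℝ (EuclideanSpace ℝ (Fin n))).symm.continuous.comp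
      (hφ_smooth.continuous_fderiv (by simp))
  obtain ⟨M, hM0, hM⟩ : ∃ M : ℝ, 0 ≤ M ∧ ∀ y, ‖gradient φ y‖ ≤ M := by
    have hcs : HasCompactSupport (gradient φ) := by
      have h1 := hφ_supp.fderiv (𝕜 := ℝ)
      have h2 : gradient φ
          = ((toDual ℝ (EuclideanSpace ℝ (Fin n))).symm : _ → _) ∘ fderiv ℝ φ := rfl
      rw [h2]
      exact h1.comp_left (by simp)
    obtain ⟨M, hM⟩ := hcs.exists_bound_of_continuous hgradc
    exact ⟨M, le_trans (norm_nonneg _) (hM 0), hM⟩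
  have hgrad0 : ∀ y : EuclideanSpace ℝ (Fin n), 1 < ‖y‖ → gradient φ y = 0 := by
    intro y hy
    apply gradient_eq_zero_of_eventually_const'
    have ho : IsOpen {z : EuclideanSpace ℝ (Fin n) | 1 < ‖z‖} :=
      isOpen_lt continuous_const continuous_norm
    filter_upwards [ho.mem_nhds hy] with z hz
    exact hφ_zero z hz.le
  -- norms and constants
  set Nu : ℝ≥0∞ := eLpNorm u P volume with hNudef
  set Nθ : ℝ≥0∞ := eLpNorm θ P volume with hNθdef
  have hNu : Nu ≠ ⊤ := hu.2.ne
  have hNθ : Nθ ≠ ⊤ := hθ.2.ne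
  have hNθ2 : Nθ ^ (2:ℝ) ≠ ⊤ := ENNReal.rpow_ne_top_of_nonneg (by norm_num) hNθ
  set B0 : ℝ≥0∞ := volume (Metric.ball (0 : EuclideanSpace ℝ (Fin n)) 1) with hB0def
  have hB0 : B0 ≠ ⊤ := measure_ball_lt_top.ne
  set B : ℝ≥0∞ := B0 ^ (1 / qr) with hBdef
  have hB : B ≠ ⊤ := (ENNReal.rpow_lt_top_of_nonneg (one_div_pos.mpr hqr).le hB0).ne
  set C : ℝ := M * B.toReal + 1 with hCdef
  have hC : 0 < C := by positivity
  -- the main estimate for each R > 1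
  have main : ∀ R : ℝ, 1 < R →
      Integrable (fun x => θ x ^ 2 * ⟪u x, gradient (fun y => φ (R⁻¹ • y)) x⟫) volume ∧
      |∫ x, θ x ^ 2 * ⟪u x, gradient (fun y => φ (R⁻¹ • y)) x⟫|
        ≤ C * Nu.toReal * Nθ.toReal ^ 2 * R ^ (-1 + β) := by
    intro R hR
    have hR0 : (0:ℝ) < R := lt_trans one_pos hR
    have hRinv : (0:ℝ) < R⁻¹ := inv_pos.mpr hR0
    have hg : ∀ x, gradient (fun y => φ (R⁻¹ • y)) x = R⁻¹ • gradient φ (R⁻¹ • x) :=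
      fun x => gradient_comp_smul' φ hφ_smooth R⁻¹ x
    have hgc : Continuous (fun x => gradient (fun y => φ (R⁻¹ • y)) x) := by
      have he : (fun x => gradient (fun y => φ (R⁻¹ • y)) x)
          = fun x => R⁻¹ • gradient φ (R⁻¹ • x) := funext hg
      rw [he]
      exact (hgradc.comp (continuous_const_smul R⁻¹)).const_smul R⁻¹
    have hmeas : AEStronglyMeasurable
        (fun x => θ x ^ 2 * ⟪u x, gradient (fun y => φ (R⁻¹ • y)) x⟫) volume := by
      have h1 : AEStronglyMeasurable
          (fun x => ⟪u x, gradient (fun y => φ (R⁻¹ • y)) x⟫) volume :=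
        hu.1.inner hgc.aestronglyMeasurable
      have h2 := (hθ.1.mul hθ.1).mul h1
      refine h2.congr (ae_of_all _ fun x => ?_)
      simp [pow_two]
    set s : Set (EuclideanSpace ℝ (Fin n)) := Metric.closedBall 0 R with hsdef
    have hsm : MeasurableSet s := Metric.isClosed_closedBall.measurableSet
    have hxball : ∀ x : EuclideanSpace ℝ (Fin n), x ∈ s ↔ ‖x‖ ≤ R := by
      intro x
      rw [hsdef, Metric.mem_closedBall, dist_zero_right]
    have hptw : ∀ x, ENNReal.ofReal ‖θ x ^ 2 * ⟪u x, gradient (fun y => φ (R⁻¹ • y)) x⟫‖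
        ≤ ENNReal.ofReal (R⁻¹ * M)
          * ((‖u x‖₊ : ℝ≥0∞) * ((‖θ x‖₊ : ℝ≥0∞) ^ (2:ℝ) * s.indicator (fun _ => 1) x)) := by
      intro x
      by_cases hx : x ∈ s
      · rw [Set.indicator_of_mem hx, mul_one]
        have hgb : ‖gradient (fun y => φ (R⁻¹ • y)) x‖ ≤ R⁻¹ * M := by
          rw [hg x, norm_smul, Real.norm_eq_abs, abs_of_pos hRinv]
          exact mul_le_mul_of_nonneg_left (hM _) hRinv.le
        have hreal : ‖θ x ^ 2 * ⟪u x, gradient (fun y => φ (R⁻¹ • y)) x⟫‖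
            ≤ (R⁻¹ * M) * (‖u x‖ * ‖θ x‖ ^ 2) := by
          rw [norm_mul, norm_pow]
          have h2 : ‖⟪u x, gradient (fun y => φ (R⁻¹ • y)) x⟫‖
              ≤ ‖u x‖ * ‖gradient (fun y => φ (R⁻¹ • y)) x‖ := by
            rw [Real.norm_eq_abs]
            exact abs_real_inner_le_norm _ _
          calc ‖θ x‖ ^ 2 * ‖⟪u x, gradient (fun y => φ (R⁻¹ • y)) x⟫‖
              ≤ ‖θ x‖ ^ 2 * (‖u x‖ * (R⁻¹ * M)) := by
                refine mul_le_mul_of_nonneg_left ?_ (by positivity)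
                calc ‖⟪u x, gradient (fun y => φ (R⁻¹ • y)) x⟫‖
                    ≤ ‖u x‖ * ‖gradient (fun y => φ (R⁻¹ • y)) x‖ := h2
                  _ ≤ ‖u x‖ * (R⁻¹ * M) :=
                      mul_le_mul_of_nonneg_left hgb (norm_nonneg _)
            _ = (R⁻¹ * M) * (‖u x‖ * ‖θ x‖ ^ 2) := by ring
        calc ENNReal.ofReal ‖θ x ^ 2 * ⟪u x, gradient (fun y => φ (R⁻¹ • y)) x⟫‖
            ≤ ENNReal.ofReal ((R⁻¹ * M) * (‖u x‖ * ‖θ x‖ ^ 2)) :=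
              ENNReal.ofReal_le_ofReal hreal
          _ = ENNReal.ofReal (R⁻¹ * M) * ((‖u x‖₊ : ℝ≥0∞) * (‖θ x‖₊ : ℝ≥0∞) ^ (2:ℝ)) := by
              rw [ENNReal.ofReal_mul (by positivity), ENNReal.ofReal_mul (norm_nonneg _)]
              congr 1
              congr 1
              · exact ofReal_norm _
              · rw [← enorm_eq_nnnorm, ← ofReal_norm, ENNReal.ofReal_rpow_of_nonneg
                  (norm_nonneg _) (by norm_num)]
                congr 1
                rw [← Real.rpow_natCast ‖θ x‖ 2]
                norm_num
      · have hxn : R < ‖x‖ := not_le.mp ((hxball x).not.mp hx)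
        have hz : gradient φ (R⁻¹ • x) = 0 := by
          apply hgrad0
          rw [norm_smul, Real.norm_eq_abs, abs_of_pos hRinv]
          have h2 := mul_lt_mul_of_pos_left hxn hRinv
          rwa [inv_mul_cancel₀ hR0.ne'] at h2
        have hgx : gradient (fun y => φ (R⁻¹ • y)) x = 0 := by rw [hg x, hz, smul_zero]
        simp only [hgx, inner_zero_right, mul_zero, norm_zero, ENNReal.ofReal_zero]
        exact zero_le
    -- the lintegral estimate
    have hNu_eq : Nu = (∫⁻ x, (‖u x‖₊ : ℝ≥0∞) ^ pr ∂volume) ^ (1/pr) := by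
      rw [hNudef, eLpNorm_eq_lintegral_rpow_enorm_toReal hP0 hPt, hPr]
      simp only [enorm_eq_nnnorm]
    have hNθ_eq : Nθ = (∫⁻ x, (‖θ x‖₊ : ℝ≥0∞) ^ pr ∂volume) ^ (1/pr) := by
      rw [hNθdef, eLpNorm_eq_lintegral_rpow_enorm_toReal hP0 hPt, hPr]
      simp only [enorm_eq_nnnorm]
    have hvol : (volume s) ^ (1/qr) = ENNReal.ofReal (R ^ β) * B := by
      have h1 : volume s = ENNReal.ofReal (R ^ n) * B0 := by
        rw [hsdef, Measure.addHaar_closedBall _ _ hR0.le, hB0def,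
          finrank_euclideanSpace_fin]
      rw [h1, ENNReal.mul_rpow_of_nonneg _ _ (one_div_pos.mpr hqr).le, hBdef,
        ENNReal.ofReal_rpow_of_pos (pow_pos hR0 n)]
      congr 2
      rw [← Real.rpow_natCast R n, ← Real.rpow_mul hR0.le, hβq]
    have hJ : (∫⁻ x, ENNReal.ofReal
          ‖θ x ^ 2 * ⟪u x, gradient (fun y => φ (R⁻¹ • y)) x⟫‖ ∂volume)
        ≤ ENNReal.ofReal (R⁻¹ * M)
          * (Nu * Nθ ^ (2:ℝ) * (ENNReal.ofReal (R ^ β) * B)) := by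
      calc (∫⁻ x, ENNReal.ofReal
            ‖θ x ^ 2 * ⟪u x, gradient (fun y => φ (R⁻¹ • y)) x⟫‖ ∂volume)
          ≤ ∫⁻ x, ENNReal.ofReal (R⁻¹ * M)
            * ((‖u x‖₊ : ℝ≥0∞) * ((‖θ x‖₊ : ℝ≥0∞) ^ (2:ℝ)
              * s.indicator (fun _ => 1) x)) ∂volume := lintegral_mono hptw
        _ = ENNReal.ofReal (R⁻¹ * M) * ∫⁻ x, (‖u x‖₊ : ℝ≥0∞)
            * ((‖θ x‖₊ : ℝ≥0∞) ^ (2:ℝ) * s.indicator (fun _ => 1) x) ∂volume :=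
            lintegral_const_mul' _ _ ENNReal.ofReal_ne_top
        _ ≤ ENNReal.ofReal (R⁻¹ * M)
            * (Nu * Nθ ^ (2:ℝ) * (ENNReal.ofReal (R ^ β) * B)) := by
            refine mul_le_mul_right ?_ _
            have hh := holder3 volume hpr hqr hsum u θ hu.1 hθ.1 s hsm
            rw [← hNu_eq, ← hNθ_eq, hvol] at hh
            exact hh
    have hRHSne : ENNReal.ofReal (R⁻¹ * M)
        * (Nu * Nθ ^ (2:ℝ) * (ENNReal.ofReal (R ^ β) * B)) ≠ ⊤ :=
      ENNReal.mul_ne_top ENNReal.ofReal_ne_top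
        (ENNReal.mul_ne_top (ENNReal.mul_ne_top hNu hNθ2)
          (ENNReal.mul_ne_top ENNReal.ofReal_ne_top hB))
    have hint : Integrable
        (fun x => θ x ^ 2 * ⟪u x, gradient (fun y => φ (R⁻¹ • y)) x⟫) volume := by
      refine ⟨hmeas, ?_⟩
      rw [hasFiniteIntegral_iff_norm]
      exact lt_of_le_of_lt hJ (lt_top_iff_ne_top.mpr hRHSne)
    refine ⟨hint, ?_⟩
    have habs : |∫ x, θ x ^ 2 * ⟪u x, gradient (fun y => φ (R⁻¹ • y)) x⟫|
        ≤ (∫⁻ x, ENNReal.ofReal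
          ‖θ x ^ 2 * ⟪u x, gradient (fun y => φ (R⁻¹ • y)) x⟫‖ ∂volume).toReal := by
      rw [← Real.norm_eq_abs]
      exact norm_integral_le_lintegral_norm _
    have hJle : (∫⁻ x, ENNReal.ofReal
          ‖θ x ^ 2 * ⟪u x, gradient (fun y => φ (R⁻¹ • y)) x⟫‖ ∂volume).toReal
        ≤ (R⁻¹ * M) * (Nu.toReal * Nθ.toReal ^ 2 * (R ^ β * B.toReal)) := by
      have h1 := ENNReal.toReal_mono hRHSne hJ
      have h2 : (ENNReal.ofReal (R⁻¹ * M)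
          * (Nu * Nθ ^ (2:ℝ) * (ENNReal.ofReal (R ^ β) * B))).toReal
          = (R⁻¹ * M) * (Nu.toReal * Nθ.toReal ^ 2 * (R ^ β * B.toReal)) := by
        have h3 : (Nθ ^ (2:ℝ)).toReal = Nθ.toReal ^ 2 := by
          rw [← ENNReal.toReal_rpow, ← Real.rpow_natCast Nθ.toReal 2]
          norm_num
        simp only [ENNReal.toReal_mul, h3,
          ENNReal.toReal_ofReal (by positivity : (0:ℝ) ≤ R⁻¹ * M),
          ENNReal.toReal_ofReal (Real.rpow_nonneg hR0.le β)]
      rw [h2] at h1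
      exact h1
    have hfinal : (R⁻¹ * M) * (Nu.toReal * Nθ.toReal ^ 2 * (R ^ β * B.toReal))
        ≤ C * Nu.toReal * Nθ.toReal ^ 2 * R ^ (-1 + β) := by
      have hRpow : R⁻¹ * R ^ β = R ^ (-1 + β) := by
        rw [Real.rpow_add hR0, Real.rpow_neg_one]
      have heq : (R⁻¹ * M) * (Nu.toReal * Nθ.toReal ^ 2 * (R ^ β * B.toReal))
          = (M * B.toReal) * (Nu.toReal * Nθ.toReal ^ 2 * R ^ (-1 + β)) := by
        rw [← hRpow]; ring
      rw [heq]
      calc (M * B.toReal) * (Nu.toReal * Nθ.toReal ^ 2 * R ^ (-1 + β))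
          ≤ C * (Nu.toReal * Nθ.toReal ^ 2 * R ^ (-1 + β)) := by
            refine mul_le_mul_of_nonneg_right (by rw [hCdef]; linarith) ?_
            have := Real.rpow_nonneg hR0.le (-1 + β)
            positivity
        _ = C * Nu.toReal * Nθ.toReal ^ 2 * R ^ (-1 + β) := by ring
    linarith [le_trans habs hJle]
  -- assemble
  refine ⟨⟨C, hC, main⟩, hβ1, ?_⟩
  have h0 : Tendsto (fun R : ℝ => R ^ (-1 + β)) atTop (nhds 0) := by
    have h1 := tendsto_rpow_neg_atTop (show (0:ℝ) < 1 - β by linarith)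
    have h2 : -(1 - β) = -1 + β := by ring
    simpa [h2] using h1
  refine squeeze_zero_norm'
    (a := fun R : ℝ => C * Nu.toReal * Nθ.toReal ^ 2 * R ^ (-1 + β)) ?_ ?_
  · filter_upwards [eventually_gt_atTop (1:ℝ)] with R hR
    rw [Real.norm_eq_abs]
    exact (main R hR).2
  · have h2 := h0.const_mul (C * Nu.toReal * Nθ.toReal ^ 2)
    rw [mul_zero] at h2
    exact h2.congr (fun R => by ring)
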